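/- (Proposition 3) Let N_A, N_B ≥ 2 and let ρ^A : Matrix (Fin N_A) (Fin N_A) ℂ and ρ^B : Matrix (Fin N_B) (Fin N_B) ℂ be density matrices, and set ρ = ρ^A ⊗ₖ ρ^B (a simply separable state). Then ‖RM(ρ)‖_tr ≤ 1, and equality ‖RM(ρ)‖_tr = 1 holds if and only if ρ is a pure state, i.e. ρ·ρ = ρ (equivalently, ρ^A·ρ^A = ρ^A and ρ^B·ρ^B = ρ^B). -/

import Mathlib

open Matrix Kronecker Complex ComplexOrder

noncomputable def traceNorm {m n : Type*} [Fintype m] [Fintype n] [DecidableEq n]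
    (M : Matrix m n ℂ) : ℝ :=
  (((Matrix.posSemidef_conjTranspose_mul_self M).isHermitian.eigenvectorUnitary : Matrix n n ℂ) *
      diagonal (((↑) : ℝ → ℂ) ∘ (√·) ∘ (Matrix.posSemidef_conjTranspose_mul_self M).isHermitian.eigenvalues) *
      (star ((Matrix.posSemidef_conjTranspose_mul_self M).isHermitian.eigenvectorUnitary :
        Matrix n n ℂ))).trace.re

def realign {NA NB : ℕ} (ρ : Matrix (Fin NA × Fin NB) (Fin NA × Fin NB) ℂ) :
    Matrix (Fin NA × Fin NA) (Fin NB × Fin NB) ℂ :=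
  fun p q => ρ (p.1, q.1) (p.2, q.2)

def IsDensityMatrix {n : Type*} [Fintype n] (ρ : Matrix n n ℂ) : Prop :=
  ρ.PosSemidef ∧ ρ.trace = 1

noncomputable def hsNorm {m n : Type*} [Fintype m] [Fintype n] (M : Matrix m n ℂ) : ℝ :=
  Real.sqrt (∑ i, ∑ j, ‖M i j‖ ^ 2)

noncomputable def hsInner {m n : Type*} [Fintype m] [Fintype n] (X Y : Matrix m n ℂ) : ℂ :=
  (Xᴴ * Y).trace

noncomputable def marginalA {NA NB : ℕ} (ρ : Matrix (Fin NA × Fin NB) (Fin NA × Fin NB) ℂ) :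
    Matrix (Fin NA) (Fin NA) ℂ :=
  fun m n => ∑ μ, ρ (m, μ) (n, μ)

noncomputable def marginalB {NA NB : ℕ} (ρ : Matrix (Fin NA × Fin NB) (Fin NA × Fin NB) ℂ) :
    Matrix (Fin NB) (Fin NB) ℂ :=
  fun μ ν => ∑ m, ρ (m, μ) (m, ν)

def SeparableState {NA NB : ℕ} (ρ : Matrix (Fin NA × Fin NB) (Fin NA × Fin NB) ℂ) : Prop :=
  ∃ (ι : Type) (s : Finset ι) (p : ι → ℝ)
    (ρA : ι → Matrix (Fin NA) (Fin NA) ℂ) (ρB : ι → Matrix (Fin NB) (Fin NB) ℂ),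
    (∀ i ∈ s, 0 < p i) ∧ (∑ i ∈ s, p i = 1) ∧
    (∀ i ∈ s, IsDensityMatrix (ρA i)) ∧ (∀ i ∈ s, IsDensityMatrix (ρB i)) ∧
    ρ = ∑ i ∈ s, (p i : ℂ) • (ρA i ⊗ₖ ρB i)

noncomputable def l2OpNorm {n : Type*} [Fintype n] [DecidableEq n] (M : Matrix n n ℂ) : ℝ :=
  ‖Matrix.toEuclideanCLM (𝕜 := ℂ) (n := n) M‖

/-!
The realignment of `ρA ⊗ₖ ρB` is the rank-one matrix `vec ρA (vec ρB)ᵀ`, whose trace norm is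
`‖ρA‖₂ ‖ρB‖₂ = ‖ρA ⊗ₖ ρB‖₂` (Hilbert–Schmidt norms). For a density matrix `ρ` with eigenvalues
`λᵢ ≥ 0`, `∑ λᵢ = 1`, we have `‖ρ‖₂² = tr ρ² = ∑ λᵢ² ≤ 1`, with equality iff every `λᵢ ∈ {0, 1}`,
i.e. iff `ρ² = ρ`. Apply this to the density matrix `ρA ⊗ₖ ρB`.
-/

section SumEqOne

variable {ι : Type*} [Fintype ι] {x : ι → ℝ}

theorem sq_le_self_of_sum_eq_one (hx : ∀ i, 0 ≤ x i) (hsum : ∑ i, x i = 1) (i : ι) :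
    x i ^ 2 ≤ x i := by
  have : x i ≤ 1 := hsum ▸ Finset.single_le_sum (fun j _ => hx j) (Finset.mem_univ i)
  nlinarith [hx i]

theorem sum_sq_le_one_of_sum_eq_one (hx : ∀ i, 0 ≤ x i) (hsum : ∑ i, x i = 1) :
    ∑ i, x i ^ 2 ≤ 1 :=
  hsum ▸ Finset.sum_le_sum fun i _ => sq_le_self_of_sum_eq_one hx hsum i

theorem sum_sq_eq_one_iff_of_sum_eq_one (hx : ∀ i, 0 ≤ x i) (hsum : ∑ i, x i = 1) :
    ∑ i, x i ^ 2 = 1 ↔ ∀ i, x i ^ 2 = x i := by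
  conv_lhs => rw [← hsum]
  simpa using Finset.sum_eq_sum_iff_of_le (s := Finset.univ) fun i _ =>
    sq_le_self_of_sum_eq_one hx hsum i

end SumEqOne

namespace Matrix

variable {𝕜 : Type*} [RCLike 𝕜] {n : Type*} [Fintype n] [DecidableEq n] {A : Matrix n n 𝕜}

theorem IsHermitian.trace_cfc (hA : A.IsHermitian) (f : ℝ → ℝ) :
    (cfc f A).trace = ∑ i, (f (hA.eigenvalues i) : 𝕜) := by
  rw [hA.cfc_eq, IsHermitian.cfc, Unitary.conjStarAlgAut_apply, trace_mul_cycle,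
    Unitary.coe_star_mul_self, one_mul, trace_diagonal]
  rfl

theorem IsHermitian.trace_mul_self (hA : A.IsHermitian) :
    (A * A).trace = ∑ i, ((hA.eigenvalues i ^ 2 : ℝ) : 𝕜) := by
  rw [← sq, ← cfc_pow_id (R := ℝ) A 2 hA.isSelfAdjoint, hA.trace_cfc]

theorem IsHermitian.mul_self_eq_self_iff (hA : A.IsHermitian) :
    A * A = A ↔ ∀ i, hA.eigenvalues i ^ 2 = hA.eigenvalues i := by
  rw [← sq, ← cfc_pow_id (R := ℝ) A 2 hA.isSelfAdjoint]
  conv_lhs => rhs; rw [← cfc_id' ℝ A]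
  rw [cfc_eq_cfc_iff_eqOn, hA.spectrum_real_eq_range_eigenvalues]
  simp [Set.EqOn]

theorem PosSemidef.cfc_sqrt_sq (hA : A.PosSemidef) : cfc Real.sqrt (A ^ 2) = A := by
  have hA' : IsSelfAdjoint A := hA.isHermitian
  rw [← cfc_comp_pow Real.sqrt 2 A]
  conv_rhs => rw [← cfc_id' ℝ A]
  refine cfc_congr fun x hx => Real.sqrt_sq ?_
  obtain ⟨i, rfl⟩ := hA.isHermitian.spectrum_real_eq_range_eigenvalues ▸ hx
  exact hA.eigenvalues_nonneg i

end Matrix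

theorem star_dotProduct_self_eq_sum_norm_sq {n : Type*} [Fintype n] (a : n → ℂ) :
    star a ⬝ᵥ a = ((∑ i, ‖a i‖ ^ 2 : ℝ) : ℂ) := by
  simp [dotProduct, Complex.conj_mul']

section TraceNorm

variable {m n : Type*} [Fintype m] [Fintype n] [DecidableEq n]

theorem traceNorm_eq_re_trace_cfc_sqrt (M : Matrix m n ℂ) :
    traceNorm M = (cfc Real.sqrt (Mᴴ * M)).trace.re := by
  rw [(posSemidef_conjTranspose_mul_self M).isHermitian.cfc_eq, IsHermitian.cfc,
    Unitary.conjStarAlgAut_apply]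
  rfl

theorem traceNorm_eq_re_trace_of_sq_eq {M : Matrix m n ℂ} {S : Matrix n n ℂ} (hS : S.PosSemidef)
    (hSM : S ^ 2 = Mᴴ * M) : traceNorm M = S.trace.re := by
  rw [traceNorm_eq_re_trace_cfc_sqrt, ← hSM, hS.cfc_sqrt_sq]

theorem traceNorm_vecMulVec (a : m → ℂ) (b : n → ℂ) :
    traceNorm (vecMulVec a b) = √(∑ i, ‖a i‖ ^ 2) * √(∑ j, ‖b j‖ ^ 2) := by
  obtain rfl | hb := eq_or_ne b 0
  · have h0 : vecMulVec a (0 : n → ℂ) = 0 := by ext; simp [vecMulVec_apply]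
    rw [h0, traceNorm_eq_re_trace_of_sq_eq PosSemidef.zero (by simp)]
    simp
  set c := ∑ i, ‖a i‖ ^ 2
  set d := ∑ j, ‖b j‖ ^ 2
  have hd : 0 < d := by
    refine (Finset.sum_nonneg fun j _ => sq_nonneg ‖b j‖).lt_of_ne' fun h => hb ?_
    rw [← dotProduct_star_self_eq_zero, star_dotProduct_self_eq_sum_norm_sq]
    exact_mod_cast h
  set N := vecMulVec (star b) b
  have hMM : (vecMulVec a b)ᴴ * vecMulVec a b = (c : ℂ) • N := by
    rw [conjTranspose_vecMulVec, vecMulVec_mul_vecMulVec, star_dotProduct_self_eq_sum_norm_sq,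
      vecMulVec_smul]
  have hNN : N * N = (d : ℂ) • N := by
    rw [vecMulVec_mul_vecMulVec, dotProduct_comm, star_dotProduct_self_eq_sum_norm_sq,
      vecMulVec_smul]
  have hN : N.trace = d := by
    rw [trace_vecMulVec, star_dotProduct_self_eq_sum_norm_sq]
  -- `N² = d • N`, so `(√c / √d) • N` squares to `c • N = Mᴴ M`.
  rw [traceNorm_eq_re_trace_of_sq_eq (S := ((√c / √d : ℝ) : ℂ) • N)
    ((posSemidef_vecMulVec_star_self b).smul (by positivity))]
  · rw [trace_smul, hN, smul_eq_mul, ← Complex.ofReal_mul, Complex.ofReal_re]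
    field_simp
    rw [Real.sq_sqrt hd.le]
  · rw [sq, smul_mul_smul_comm, hNN, smul_smul, hMM, ← Complex.ofReal_mul, ← Complex.ofReal_mul]
    congr 2
    field_simp
    rw [Real.sq_sqrt hd.le, Real.sq_sqrt (by positivity), mul_comm]

end TraceNorm

section HilbertSchmidt

variable {m n : Type*} [Fintype m] [Fintype n]

theorem hsNorm_nonneg (A : Matrix m n ℂ) : 0 ≤ hsNorm A :=
  Real.sqrt_nonneg _

theorem hsNorm_sq (A : Matrix m n ℂ) : hsNorm A ^ 2 = (Aᴴ * A).trace.re := by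
  rw [hsNorm, Real.sq_sqrt (by positivity), Finset.sum_comm, trace, Complex.re_sum]
  refine Finset.sum_congr rfl fun j _ => ?_
  simp only [diag_apply, mul_apply, conjTranspose_apply, Complex.re_sum, RCLike.star_def,
    Complex.conj_mul', ← Complex.ofReal_pow, Complex.ofReal_re]

theorem hsNorm_kronecker {p q : Type*} [Fintype p] [Fintype q] (A : Matrix m n ℂ)
    (B : Matrix p q ℂ) : hsNorm (A ⊗ₖ B) = hsNorm A * hsNorm B := by
  rw [hsNorm, hsNorm, hsNorm, ← Real.sqrt_mul (by positivity)]
  simp only [Fintype.sum_prod_type, kroneckerMap_apply, norm_mul, mul_pow, Finset.sum_mul_sum]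

end HilbertSchmidt

theorem IsDensityMatrix.kronecker {m n : Type*} [Fintype m] [Fintype n] {ρ : Matrix m m ℂ}
    {σ : Matrix n n ℂ} (hρ : IsDensityMatrix ρ) (hσ : IsDensityMatrix σ) :
    IsDensityMatrix (ρ ⊗ₖ σ) :=
  ⟨hρ.1.kronecker hσ.1, by rw [trace_kronecker, hρ.2, hσ.2, mul_one]⟩

namespace IsDensityMatrix

variable {n : Type*} [Fintype n] [DecidableEq n] {ρ : Matrix n n ℂ}

theorem sum_eigenvalues (hρ : IsDensityMatrix ρ) : ∑ i, hρ.1.1.eigenvalues i = 1 := by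
  apply RCLike.ofReal_injective (K := ℂ)
  rw [RCLike.ofReal_sum, RCLike.ofReal_one, ← hρ.1.1.trace_eq_sum_eigenvalues, hρ.2]

theorem hsNorm_sq_eq_sum_eigenvalues_sq (hρ : IsDensityMatrix ρ) :
    hsNorm ρ ^ 2 = ∑ i, hρ.1.1.eigenvalues i ^ 2 := by
  rw [hsNorm_sq, hρ.1.1.eq, hρ.1.1.trace_mul_self]
  exact_mod_cast Complex.ofReal_re _

theorem hsNorm_le_one (hρ : IsDensityMatrix ρ) : hsNorm ρ ≤ 1 := by
  rw [← sq_le_one_iff₀ (hsNorm_nonneg ρ), hρ.hsNorm_sq_eq_sum_eigenvalues_sq]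
  exact sum_sq_le_one_of_sum_eq_one hρ.1.eigenvalues_nonneg hρ.sum_eigenvalues

theorem hsNorm_eq_one_iff (hρ : IsDensityMatrix ρ) : hsNorm ρ = 1 ↔ ρ * ρ = ρ := by
  rw [← pow_eq_one_iff_of_nonneg (hsNorm_nonneg ρ) two_ne_zero,
    hρ.hsNorm_sq_eq_sum_eigenvalues_sq, hρ.1.1.mul_self_eq_self_iff]
  exact sum_sq_eq_one_iff_of_sum_eq_one hρ.1.eigenvalues_nonneg hρ.sum_eigenvalues

end IsDensityMatrix

theorem realign_kronecker {NA NB : ℕ} (A : Matrix (Fin NA) (Fin NA) ℂ)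
    (B : Matrix (Fin NB) (Fin NB) ℂ) :
    realign (A ⊗ₖ B) = vecMulVec (fun p => A p.1 p.2) (fun q => B q.1 q.2) :=
  rfl

theorem traceNorm_realign_kronecker {NA NB : ℕ} (A : Matrix (Fin NA) (Fin NA) ℂ)
    (B : Matrix (Fin NB) (Fin NB) ℂ) :
    traceNorm (realign (A ⊗ₖ B)) = hsNorm A * hsNorm B := by
  rw [realign_kronecker, traceNorm_vecMulVec, hsNorm, hsNorm, Fintype.sum_prod_type,
    Fintype.sum_prod_type]

theorem traceNorm_realign_simply_separable_general
    (NA NB : ℕ)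
    (ρA : Matrix (Fin NA) (Fin NA) ℂ) (ρB : Matrix (Fin NB) (Fin NB) ℂ)
    (hρA : IsDensityMatrix ρA) (hρB : IsDensityMatrix ρB) :
    traceNorm (realign (ρA ⊗ₖ ρB)) ≤ 1 ∧
      (traceNorm (realign (ρA ⊗ₖ ρB)) = 1 ↔
        (ρA ⊗ₖ ρB) * (ρA ⊗ₖ ρB) = ρA ⊗ₖ ρB) := by
  have hρ := hρA.kronecker hρB
  rw [traceNorm_realign_kronecker, ← hsNorm_kronecker]
  exact ⟨hρ.hsNorm_le_one, hρ.hsNorm_eq_one_iff⟩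

theorem traceNorm_realign_simply_separable
    (NA NB : ℕ) (hNA : 2 ≤ NA) (hNB : 2 ≤ NB)
    (ρA : Matrix (Fin NA) (Fin NA) ℂ) (ρB : Matrix (Fin NB) (Fin NB) ℂ)
    (hρA : IsDensityMatrix ρA) (hρB : IsDensityMatrix ρB) :
    traceNorm (realign (ρA ⊗ₖ ρB)) ≤ 1 ∧
      (traceNorm (realign (ρA ⊗ₖ ρB)) = 1 ↔
        (ρA ⊗ₖ ρB) * (ρA ⊗ₖ ρB) = ρA ⊗ₖ ρB) :=
  traceNorm_realign_simply_separable_general NA NB ρA ρB hρA hρB
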